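/- Assume 𝒜𝒜* is invertible and a triple (X*, y*, S*) satisfies the optimality conditions with ‖X*‖_F ≤ R_X and ‖S*‖_F ≤ R_S. Then there exists an absolute constant c > 0 such that for every ε > 0, if the exact classical ADMM iteration with γ = 1 is initialized at (X⁰, S⁰) = (0, 0) and run for K ≥ c·(1 + R_X² + R_S²)/ε iterations, the averaged iterates ȳᴷ = (1/K) Σ_{k=1}^{K} yᵏ and S̄ᴷ = (1/K) Σ_{k=1}^{K} Sᵏ satisfy −bᵀȳᴷ + bᵀy* ≤ ε and ‖𝒜*(ȳᴷ) + S̄ᴷ − C‖_F ≤ ε. -/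

import Mathlib

open Matrix

namespace QADMM

variable {n m : ℕ}

/-- Trace inner product `⟨A,B⟩ = Tr(AᵀB)`. -/
noncomputable def minner (A B : Matrix (Fin n) (Fin n) ℝ) : ℝ :=
  Matrix.trace (Aᵀ * B)

/-- Frobenius norm `‖X‖_F = √(Tr(Xᵀ X))`. -/
noncomputable def frob (X : Matrix (Fin n) (Fin n) ℝ) : ℝ :=
  Real.sqrt (Matrix.trace (Xᵀ * X))

/-- The linear map `𝒜(X) = (⟨A⁽¹⁾,X⟩, …, ⟨A⁽ᵐ⁾,X⟩)`. -/
noncomputable def Amap (A : Fin m → Matrix (Fin n) (Fin n) ℝ)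
    (X : Matrix (Fin n) (Fin n) ℝ) : Fin m → ℝ :=
  fun i => minner (A i) X

/-- The adjoint map `𝒜*(y) = Σᵢ yᵢ A⁽ⁱ⁾`. -/
noncomputable def Aadj (A : Fin m → Matrix (Fin n) (Fin n) ℝ)
    (y : Fin m → ℝ) : Matrix (Fin n) (Fin n) ℝ :=
  ∑ i, y i • A i

/-- The `m×m` matrix `𝒜𝒜*` with entries `⟨A⁽ⁱ⁾, A⁽ʲ⁾⟩`. -/
noncomputable def AAt (A : Fin m → Matrix (Fin n) (Fin n) ℝ) : Matrix (Fin m) (Fin m) ℝ :=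
  Matrix.of fun i j => minner (A i) (A j)

/-- `proj` is the Frobenius-metric projection onto the PSD cone: `proj Z` is positive
semidefinite and is a nearest PSD matrix to `Z` in Frobenius norm. -/
def IsProjPSD (proj : Matrix (Fin n) (Fin n) ℝ → Matrix (Fin n) (Fin n) ℝ) : Prop :=
  ∀ Z : Matrix (Fin n) (Fin n) ℝ,
    (proj Z).PosSemidef ∧
    ∀ W : Matrix (Fin n) (Fin n) ℝ, W.PosSemidef → frob (Z - proj Z) ≤ frob (Z - W)

/-- `(X*, y*, S*)` satisfies the SDP optimality conditions: primal feasibility, dual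
feasibility, and complementary slackness. -/
def OptCond (A : Fin m → Matrix (Fin n) (Fin n) ℝ) (C : Matrix (Fin n) (Fin n) ℝ)
    (b : Fin m → ℝ) (Xs : Matrix (Fin n) (Fin n) ℝ) (ys : Fin m → ℝ)
    (Ss : Matrix (Fin n) (Fin n) ℝ) : Prop :=
  Amap A Xs = b ∧ Xs.PosSemidef ∧ Aadj A ys + Ss = C ∧ Ss.PosSemidef ∧ Xs * Ss = 0

/-- The exact classical ADMM iteration for the dual SDP, with parameter `γ > 0`:
`y^{k+1} = −(𝒜𝒜*)⁻¹(γ(𝒜(Xᵏ) − b) + 𝒜(Sᵏ − C))`,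
`S^{k+1} = Proj_{𝕊₊ⁿ}(C − 𝒜*(y^{k+1}) − γXᵏ)`,
`X^{k+1} = Xᵏ + (1/γ)(𝒜*(y^{k+1}) + S^{k+1} − C)`. -/
def ADMMSeq (A : Fin m → Matrix (Fin n) (Fin n) ℝ) (C : Matrix (Fin n) (Fin n) ℝ)
    (b : Fin m → ℝ) (projPSD : Matrix (Fin n) (Fin n) ℝ → Matrix (Fin n) (Fin n) ℝ)
    (γ : ℝ) (X : ℕ → Matrix (Fin n) (Fin n) ℝ) (y : ℕ → Fin m → ℝ)
    (S : ℕ → Matrix (Fin n) (Fin n) ℝ) : Prop :=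
  ∀ k : ℕ,
    y (k + 1) = -((AAt A)⁻¹.mulVec (γ • (Amap A (X k) - b) + Amap A (S k - C))) ∧
    S (k + 1) = projPSD (C - Aadj A (y (k + 1)) - γ • X k) ∧
    X (k + 1) = X k + γ⁻¹ • (Aadj A (y (k + 1)) + S (k + 1) - C)

end QADMM

namespace QADMM

section Helpers

variable (A B C : Matrix (Fin n) (Fin n) ℝ)

lemma minner_comm : minner A B = minner B A := by
  unfold minner
  rw [← Matrix.trace_transpose, Matrix.transpose_mul, Matrix.transpose_transpose]

lemma minner_add_left : minner (A + B) C = minner A C + minner B C := by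
  unfold minner; rw [Matrix.transpose_add, Matrix.add_mul, Matrix.trace_add]

lemma minner_add_right : minner A (B + C) = minner A B + minner A C := by
  unfold minner; rw [Matrix.mul_add, Matrix.trace_add]

lemma minner_sub_left : minner (A - B) C = minner A C - minner B C := by
  unfold minner; rw [Matrix.transpose_sub, Matrix.sub_mul, Matrix.trace_sub]

lemma minner_sub_right : minner A (B - C) = minner A B - minner A C := by
  unfold minner; rw [Matrix.mul_sub, Matrix.trace_sub]

lemma minner_smul_left (t : ℝ) : minner (t • A) B = t * minner A B := by
  unfold minner; rw [Matrix.transpose_smul, Matrix.smul_mul, Matrix.trace_smul]; rfl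

lemma minner_smul_right (t : ℝ) : minner A (t • B) = t * minner A B := by
  unfold minner; rw [Matrix.mul_smul, Matrix.trace_smul]; rfl

lemma minner_sum_left {ι : Type*} (s : Finset ι) (f : ι → Matrix (Fin n) (Fin n) ℝ) :
    minner (∑ i ∈ s, f i) C = ∑ i ∈ s, minner (f i) C := by
  unfold minner
  rw [Matrix.transpose_sum, Matrix.sum_mul, Matrix.trace_sum]

lemma minner_eq_sum : minner A B = ∑ i, ∑ j, A j i * B j i := by
  unfold minner
  simp [Matrix.trace, Matrix.mul_apply, Matrix.diag]

lemma minner_self_nonneg : 0 ≤ minner A A := by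
  rw [minner_eq_sum]
  exact Finset.sum_nonneg fun i _ => Finset.sum_nonneg fun j _ => mul_self_nonneg _

lemma frob_eq : frob A = Real.sqrt (minner A A) := rfl

lemma frob_nonneg : 0 ≤ frob A := Real.sqrt_nonneg _

lemma frob_sq : frob A ^ 2 = minner A A := Real.sq_sqrt (minner_self_nonneg A)

lemma minner_nonneg_of_posSemidef {A B : Matrix (Fin n) (Fin n) ℝ}
    (hA : A.PosSemidef) (hB : B.PosSemidef) : 0 ≤ minner A B := by
  have hsq : ∀ M : Matrix (Fin n) (Fin n) ℝ, M.PosSemidef → ∃ P : Matrix (Fin n) (Fin n) ℝ,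
      M = Pᴴ * P := by
    intro M hM
    open scoped MatrixOrder in
    obtain ⟨X, hX, -, rfl⟩ := CFC.exists_sqrt_of_isSelfAdjoint_of_quasispectrumRestricts
      hM.isHermitian (QuasispectrumRestricts.nnreal_of_nonneg hM.nonneg)
    exact ⟨X, by rw [← Matrix.star_eq_conjTranspose, hX.star_eq]⟩
  obtain ⟨P, hP⟩ := hsq A hA
  obtain ⟨Q, hQ⟩ := hsq B hB
  have hPt : Pᴴ = Pᵀ := rfl
  have hQt : Qᴴ = Qᵀ := rfl
  have hAt : Aᵀ = A := by
    rw [hP, hPt]; rw [Matrix.transpose_mul, Matrix.transpose_transpose]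
  rw [minner, hAt, hP, hQ, hPt, hQt]
  have h1 : Pᵀ * P * (Qᵀ * Q) = Pᵀ * (P * Qᵀ * Q) := by
    simp only [Matrix.mul_assoc]
  have h2 : P * Qᵀ * Q * Pᵀ = (Q * Pᵀ)ᵀ * (Q * Pᵀ) := by
    simp only [Matrix.transpose_mul, Matrix.transpose_transpose, Matrix.mul_assoc]
  rw [h1, Matrix.trace_mul_comm, h2, ← minner]
  exact minner_self_nonneg _

end Helpers

section Part2
variable {n : ℕ}

lemma posSemidef_smul {M : Matrix (Fin n) (Fin n) ℝ} (hM : M.PosSemidef) {t : ℝ}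
    (ht : 0 ≤ t) : (t • M).PosSemidef := by
  refine ⟨?_, fun x => ?_⟩
  · unfold Matrix.IsHermitian at *
    rw [Matrix.conjTranspose_smul, hM.1]
    congr 1
  · have h := mul_nonneg ht (hM.2 x)
    simp only [Finsupp.mul_sum] at h
    simpa [mul_assoc, mul_left_comm] using h

lemma posSemidef_combo {P W : Matrix (Fin n) (Fin n) ℝ} (hP : P.PosSemidef)
    (hW : W.PosSemidef) {t : ℝ} (h0 : 0 ≤ t) (h1 : t ≤ 1) :
    (P + t • (W - P)).PosSemidef := by
  have : P + t • (W - P) = (1 - t) • P + t • W := by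
    rw [smul_sub, sub_smul, one_smul]; abel
  rw [this]
  exact (posSemidef_smul hP (by linarith)).add (posSemidef_smul hW h0)


lemma minner_sub_smul (U V : Matrix (Fin n) (Fin n) ℝ) (t : ℝ) :
    minner (U - t • V) (U - t • V) =
      minner U U - 2 * t * minner U V + t ^ 2 * minner V V := by
  simp only [minner_sub_left, minner_sub_right, minner_smul_left, minner_smul_right]
  rw [minner_comm V U]; ring

/-- Variational inequality for the PSD projection. -/
lemma proj_vi {proj : Matrix (Fin n) (Fin n) ℝ → Matrix (Fin n) (Fin n) ℝ}
    (hproj : IsProjPSD proj) (Z W : Matrix (Fin n) (Fin n) ℝ) (hW : W.PosSemidef) :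
    minner (Z - proj Z) (W - proj Z) ≤ 0 := by
  set P := proj Z with hPdef
  obtain ⟨hPpsd, hmin⟩ := hproj Z
  by_contra hcon
  push_neg at hcon
  set s := minner (Z - P) (W - P) with hs
  set q := minner (W - P) (W - P) with hq
  have hqnn : 0 ≤ q := minner_self_nonneg _
  -- choose t
  set t := min 1 (s / (q + 1)) with htdef
  have hspos : 0 < s := hcon
  have htpos : 0 < t := lt_min one_pos (div_pos hspos (by linarith))
  have ht1 : t ≤ 1 := min_le_left _ _
  have htq : t * (q + 1) ≤ s := by
    have : t ≤ s / (q + 1) := min_le_right _ _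
    calc t * (q + 1) ≤ (s / (q + 1)) * (q + 1) := by nlinarith
    _ = s := by field_simp
  -- projection inequality at W_t
  have hWt : (P + t • (W - P)).PosSemidef := posSemidef_combo hPpsd hW htpos.le ht1
  have hfr := hmin _ hWt
  have hsq : minner (Z - P) (Z - P) ≤
      minner (Z - (P + t • (W - P))) (Z - (P + t • (W - P))) := by
    have h1 := frob_sq (Z - P)
    have h2 := frob_sq (Z - (P + t • (W - P)))
    nlinarith [frob_nonneg (Z - P), frob_nonneg (Z - (P + t • (W - P)))]
  have hexp : minner (Z - (P + t • (W - P))) (Z - (P + t • (W - P))) =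
      minner (Z - P) (Z - P) - 2 * t * s + t ^ 2 * q := by
    have h0 : Z - (P + t • (W - P)) = (Z - P) - t • (W - P) := by abel
    rw [h0, hs, hq, minner_sub_smul]
  nlinarith [htpos, hspos]
end Part2

section Part3
variable {n m : ℕ}
variable (A : Fin m → Matrix (Fin n) (Fin n) ℝ)

lemma minner_sum_right {ι : Type*} (C : Matrix (Fin n) (Fin n) ℝ) (s : Finset ι)
    (f : ι → Matrix (Fin n) (Fin n) ℝ) :
    minner C (∑ i ∈ s, f i) = ∑ i ∈ s, minner C (f i) := by
  rw [minner_comm, minner_sum_left]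
  exact Finset.sum_congr rfl fun i _ => minner_comm _ _

lemma Amap_add (M N : Matrix (Fin n) (Fin n) ℝ) :
    Amap A (M + N) = Amap A M + Amap A N := by
  funext i; simp [Amap, minner_add_right]

lemma Amap_sub (M N : Matrix (Fin n) (Fin n) ℝ) :
    Amap A (M - N) = Amap A M - Amap A N := by
  funext i; simp [Amap, minner_sub_right]

lemma adjoint_identity (w : Fin m → ℝ) (Z : Matrix (Fin n) (Fin n) ℝ) :
    minner (Aadj A w) Z = w ⬝ᵥ Amap A Z := by
  rw [Aadj, minner_sum_left]
  simp [minner_smul_left, dotProduct, Amap]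

lemma AAt_mulVec (u : Fin m → ℝ) :
    (AAt A) *ᵥ u = Amap A (Aadj A u) := by
  funext i
  show (AAt A) i ⬝ᵥ u = minner (A i) (Aadj A u)
  rw [Aadj, minner_sum_right]
  simp [AAt, dotProduct, minner_smul_right, mul_comm]

end Part3

section Part4
variable {n : ℕ}

lemma abstract_i (P P' Q Q' Ss : Matrix (Fin n) (Fin n) ℝ)
    (h1 : 0 ≤ minner P' (Ss - Q')) :
    minner ((Q' - Ss) - (P' - P)) (P' + Q - Q')
      ≤ (minner P P - minner P' P'
          + minner (Q - Ss) (Q - Ss) - minner (Q' - Ss) (Q' - Ss)) / 2 := by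
  have hnn := minner_self_nonneg ((P' - P) + (Q - Q'))
  simp only [minner_sub_left, minner_sub_right, minner_add_left, minner_add_right]
    at h1 hnn ⊢
  linarith [minner_comm P P', minner_comm P Q, minner_comm P Q', minner_comm P Ss,
    minner_comm P' Q, minner_comm P' Q', minner_comm P' Ss, minner_comm Q Q',
    minner_comm Q Ss, minner_comm Q' Ss]

lemma abstract_ii (P P' Q Q' Ss Xs : Matrix (Fin n) (Fin n) ℝ)
    (hmaster : minner ((Q' - Ss) - (P' - P)) (P' + Q - Q')
      = minner ((Q' - Ss) - (P' - P)) Xs)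
    (h1 : 0 ≤ minner P' (Ss - Q')) (h2 : 0 ≤ minner Xs Q') (h3 : minner Xs Ss = 0) :
    minner (P' - Xs) (P' - Xs) + minner (Q' - Ss) (Q' - Ss)
      ≤ minner (P - Xs) (P - Xs) + minner (Q - Ss) (Q - Ss) := by
  have hnn := minner_self_nonneg ((P' - P) + (Q - Q'))
  simp only [minner_sub_left, minner_sub_right, minner_add_left, minner_add_right]
    at h1 h2 h3 hmaster hnn ⊢
  linarith [minner_comm P P', minner_comm P Q, minner_comm P Q', minner_comm P Ss,
    minner_comm P' Q, minner_comm P' Q', minner_comm P' Ss, minner_comm Q Q',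
    minner_comm Q Ss, minner_comm Q' Ss, minner_comm Xs P, minner_comm Xs P',
    minner_comm Xs Q, minner_comm Xs Q', minner_comm Xs Ss]
end Part4

section Part5
variable {n m : ℕ}

lemma minner_zero_left (C : Matrix (Fin n) (Fin n) ℝ) : minner 0 C = 0 := by
  unfold minner; rw [Matrix.transpose_zero, Matrix.zero_mul, Matrix.trace_zero]

lemma minner_neg_left (M C : Matrix (Fin n) (Fin n) ℝ) : minner (-M) C = -minner M C := by
  have : (-M) = 0 - M := by abel
  rw [this, minner_sub_left, minner_zero_left]; ring

lemma step_lemma (A : Fin m → Matrix (Fin n) (Fin n) ℝ) (C : Matrix (Fin n) (Fin n) ℝ)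
    (b : Fin m → ℝ)
    (projPSD : Matrix (Fin n) (Fin n) ℝ → Matrix (Fin n) (Fin n) ℝ)
    (hproj : IsProjPSD projPSD) (hAAt : IsUnit (AAt A))
    (Xs : Matrix (Fin n) (Fin n) ℝ) (ys : Fin m → ℝ) (Ss : Matrix (Fin n) (Fin n) ℝ)
    (hb : Amap A Xs = b) (hXs : Xs.PosSemidef) (hfeas : Aadj A ys + Ss = C)
    (hSs : Ss.PosSemidef) (hcomp : Xs * Ss = 0)
    (P Q P' Q' : Matrix (Fin n) (Fin n) ℝ) (u : Fin m → ℝ)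
    (hy : u = -((AAt A)⁻¹ *ᵥ ((1:ℝ) • (Amap A P - b) + Amap A (Q - C))))
    (hS : Q' = projPSD (C - Aadj A u - (1:ℝ) • P))
    (hX : P' = P + (1:ℝ)⁻¹ • (Aadj A u + Q' - C)) :
    (b ⬝ᵥ ys - b ⬝ᵥ u ≤ (minner P P - minner P' P'
        + minner (Q - Ss) (Q - Ss) - minner (Q' - Ss) (Q' - Ss)) / 2)
    ∧ (minner (P' - Xs) (P' - Xs) + minner (Q' - Ss) (Q' - Ss)
        ≤ minner (P - Xs) (P - Xs) + minner (Q - Ss) (Q - Ss))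
    ∧ (Aadj A u + Q' - C = P' - P)
    ∧ Q'.PosSemidef := by
  -- basic rewrites
  have hX' : P' = P + (Aadj A u + Q' - C) := by rw [hX, inv_one, one_smul]
  have F1 : Aadj A u + Q' - C = P' - P := by rw [hX']; abel
  have F1' : Aadj A u = C - Q' + (P' - P) := by
    rw [← F1]; abel
  -- y-optimality
  have hdet : IsUnit (AAt A).det := (Matrix.isUnit_iff_isUnit_det _).mp hAAt
  have hu : (AAt A) *ᵥ u = -((1:ℝ) • (Amap A P - b) + Amap A (Q - C)) := by
    rw [hy, Matrix.mulVec_neg, Matrix.mulVec_mulVec, Matrix.mul_nonsing_inv _ hdet,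
      Matrix.one_mulVec]
  have F2 : Amap A (Aadj A u) = -((Amap A P - b) + (Amap A Q - Amap A C)) := by
    rw [← AAt_mulVec, hu, one_smul, Amap_sub]
  have hmain : Amap A (P' + Q - Q') = b := by
    have hz : P' + Q - Q' = (P + (Q - C)) + Aadj A u := by
      rw [F1']; abel
    rw [hz, Amap_add, Amap_add, Amap_sub, F2]
    funext i
    simp only [Pi.add_apply, Pi.sub_apply, Pi.neg_apply]
    ring
  -- dual feasibility of optimal point
  have hys : Aadj A ys = C - Ss := by rw [← hfeas]; abel
  have eD : Aadj A ys - Aadj A u = (Q' - Ss) - (P' - P) := by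
    rw [hys, F1']; abel
  -- the two gap expressions
  have hgap1 : b ⬝ᵥ ys - b ⬝ᵥ u = minner ((Q' - Ss) - (P' - P)) (P' + Q - Q') := by
    rw [← eD, minner_sub_left, adjoint_identity, adjoint_identity, hmain,
      dotProduct_comm b ys, dotProduct_comm b u]
  have hgap2 : b ⬝ᵥ ys - b ⬝ᵥ u = minner ((Q' - Ss) - (P' - P)) Xs := by
    rw [← eD, minner_sub_left, adjoint_identity, adjoint_identity, hb,
      dotProduct_comm b ys, dotProduct_comm b u]
  have hmaster := hgap1.symm.trans hgap2
  -- sign facts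
  have hQ'psd : Q'.PosSemidef := by rw [hS]; exact (hproj _).1
  have hvi := proj_vi hproj (C - Aadj A u - (1:ℝ) • P) Ss hSs
  have h1 : 0 ≤ minner P' (Ss - Q') := by
    rw [← hS] at hvi
    have hz : C - Aadj A u - (1:ℝ) • P - Q' = -P' := by
      rw [one_smul, hX']; abel
    rw [hz, minner_neg_left] at hvi
    linarith
  have h2 : 0 ≤ minner Xs Q' := minner_nonneg_of_posSemidef hXs hQ'psd
  have h3 : minner Xs Ss = 0 := by
    have hXst : Xsᵀ = Xs := hXs.1
    unfold minner
    rw [hXst, hcomp, Matrix.trace_zero]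
  refine ⟨?_, ?_, F1, hQ'psd⟩
  · rw [hgap1]; exact abstract_i P P' Q Q' Ss h1
  · exact abstract_ii P P' Q Q' Ss Xs hmaster h1 h2 h3

end Part5

section MainHelpers
variable {n m : ℕ}

lemma q_add_le (a b : Matrix (Fin n) (Fin n) ℝ) :
    minner (a + b) (a + b) ≤ 2 * minner a a + 2 * minner b b := by
  have h := minner_self_nonneg (a - b)
  simp only [minner_sub_left, minner_sub_right, minner_add_left, minner_add_right] at h ⊢
  linarith [minner_comm a b]

lemma Aadj_sum {ι : Type*} (A : Fin m → Matrix (Fin n) (Fin n) ℝ) (s : Finset ι)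
    (w : ι → Fin m → ℝ) : Aadj A (∑ k ∈ s, w k) = ∑ k ∈ s, Aadj A (w k) := by
  unfold Aadj
  simp only [Finset.sum_apply, Finset.sum_smul]
  exact Finset.sum_comm

lemma Aadj_smul (A : Fin m → Matrix (Fin n) (Fin n) ℝ) (c : ℝ) (w : Fin m → ℝ) :
    Aadj A (c • w) = c • Aadj A w := by
  unfold Aadj
  rw [Finset.smul_sum]
  exact Finset.sum_congr rfl fun i _ => by simp [smul_smul]

lemma sum_Icc_one {M : Type*} [AddCommMonoid M] (K : ℕ) (f : ℕ → M) :
    ∑ k ∈ Finset.Icc 1 K, f k = ∑ k ∈ Finset.range K, f (k + 1) := by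
  rw [← Finset.Ico_add_one_right_eq_Icc, Finset.sum_Ico_eq_sum_range]
  exact Finset.sum_congr (by norm_num) fun i _ => by rw [Nat.add_comm]

lemma dot_sum {ι : Type*} (b : Fin m → ℝ) (s : Finset ι) (w : ι → Fin m → ℝ) :
    b ⬝ᵥ (∑ k ∈ s, w k) = ∑ k ∈ s, b ⬝ᵥ w k := by
  simp only [dotProduct, Finset.sum_apply, Finset.mul_sum]
  exact Finset.sum_comm

end MainHelpers

/-- there is an absolute constant `c > 0` such that for every `ε > 0`, the exact
classical ADMM iteration with `γ = 1` initialized at `(X⁰, S⁰) = (0,0)`, run for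
`K ≥ c(1 + R_X² + R_S²)/ε` iterations, produces averaged iterates with dual objective gap and
dual feasibility residual at most `ε`. -/
theorem admm_iteration_complexity :
    ∃ c : ℝ, 0 < c ∧
      ∀ (n m : ℕ) (A : Fin m → Matrix (Fin n) (Fin n) ℝ), (∀ i, (A i).IsSymm) →
      ∀ (C : Matrix (Fin n) (Fin n) ℝ), C.IsSymm →
      ∀ (b : Fin m → ℝ), IsUnit (AAt A) →
      ∀ (projPSD : Matrix (Fin n) (Fin n) ℝ → Matrix (Fin n) (Fin n) ℝ), IsProjPSD projPSD →
      ∀ (Xs : Matrix (Fin n) (Fin n) ℝ) (ys : Fin m → ℝ) (Ss : Matrix (Fin n) (Fin n) ℝ),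
        OptCond A C b Xs ys Ss →
      ∀ (RX RS : ℝ), frob Xs ≤ RX → frob Ss ≤ RS →
      ∀ (X : ℕ → Matrix (Fin n) (Fin n) ℝ) (y : ℕ → Fin m → ℝ)
        (S : ℕ → Matrix (Fin n) (Fin n) ℝ),
        X 0 = 0 → S 0 = 0 → ADMMSeq A C b projPSD 1 X y S →
      ∀ ε : ℝ, 0 < ε →
      ∀ K : ℕ, 1 ≤ K → c * (1 + RX ^ 2 + RS ^ 2) / ε ≤ (K : ℝ) →
        -(b ⬝ᵥ ((K : ℝ)⁻¹ • ∑ k ∈ Finset.Icc 1 K, y k)) + b ⬝ᵥ ys ≤ ε ∧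
        frob (Aadj A ((K : ℝ)⁻¹ • ∑ k ∈ Finset.Icc 1 K, y k) +
            (K : ℝ)⁻¹ • (∑ k ∈ Finset.Icc 1 K, S k) - C) ≤ ε := by
  refine ⟨2, two_pos, ?_⟩
  intro n m A _ C _ b hAAt projPSD hproj Xs ys Ss hopt RX RS hRX hRS X y S hX0 hS0 hiter
    ε hε K hK hKb
  obtain ⟨hb, hXs, hfeas, hSs, hcomp⟩ := hopt
  have hstep : ∀ k : ℕ,
      (b ⬝ᵥ ys - b ⬝ᵥ y (k+1) ≤ (minner (X k) (X k) - minner (X (k+1)) (X (k+1))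
        + minner (S k - Ss) (S k - Ss) - minner (S (k+1) - Ss) (S (k+1) - Ss)) / 2)
      ∧ (minner (X (k+1) - Xs) (X (k+1) - Xs) + minner (S (k+1) - Ss) (S (k+1) - Ss)
        ≤ minner (X k - Xs) (X k - Xs) + minner (S k - Ss) (S k - Ss))
      ∧ (Aadj A (y (k+1)) + S (k+1) - C = X (k+1) - X k)
      ∧ (S (k+1)).PosSemidef := by
    intro k
    obtain ⟨h1, h2, h3⟩ := hiter k
    exact step_lemma A C b projPSD hproj hAAt Xs ys Ss hb hXs hfeas hSs hcomp
      (X k) (S k) (X (k+1)) (S (k+1)) (y (k+1)) h1 h2 h3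
  have hKpos : (0:ℝ) < K := by
    have : 0 < K := lt_of_lt_of_le Nat.zero_lt_one hK
    exact_mod_cast this
  have hKne : (K:ℝ) ≠ 0 := ne_of_gt hKpos
  have hRX0 : 0 ≤ RX := le_trans (frob_nonneg Xs) hRX
  have hRS0 : 0 ≤ RS := le_trans (frob_nonneg Ss) hRS
  have hεK : 2 * (1 + RX ^ 2 + RS ^ 2) ≤ ε * K := by
    rw [div_le_iff₀ hε] at hKb
    linarith
  have hqXs : minner Xs Xs ≤ RX ^ 2 := by
    rw [← frob_sq]; exact pow_le_pow_left₀ (frob_nonneg Xs) hRX 2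
  have hqSs : minner Ss Ss ≤ RS ^ 2 := by
    rw [← frob_sq]; exact pow_le_pow_left₀ (frob_nonneg Ss) hRS 2
  have hzz : minner ((0:Matrix (Fin n) (Fin n) ℝ)) 0 = 0 := minner_zero_left 0
  have hzs : ∀ M : Matrix (Fin n) (Fin n) ℝ,
      minner ((0:Matrix (Fin n) (Fin n) ℝ) - M) (0 - M) = minner M M := by
    intro M
    rw [zero_sub, minner_neg_left, minner_comm, minner_neg_left, minner_comm]
    ring
  -- Part 1: the gap bound
  constructor
  · set φ : ℕ → ℝ :=
      fun k => (minner (X k) (X k) + minner (S k - Ss) (S k - Ss)) / 2 with hφ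
    have hsumG : ∑ k ∈ Finset.range K, (b ⬝ᵥ ys - b ⬝ᵥ y (k+1)) ≤ φ 0 - φ K := by
      calc ∑ k ∈ Finset.range K, (b ⬝ᵥ ys - b ⬝ᵥ y (k+1))
          ≤ ∑ k ∈ Finset.range K, (φ k - φ (k+1)) := by
            refine Finset.sum_le_sum fun k _ => ?_
            have := (hstep k).1
            simp only [hφ]
            linarith
        _ = φ 0 - φ K := Finset.sum_range_sub' φ K
    have hφK : 0 ≤ φ K := by
      have h1 := minner_self_nonneg (X K)
      have h2 := minner_self_nonneg (S K - Ss)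
      simp only [hφ]; linarith
    have hφ0 : φ 0 ≤ RS ^ 2 / 2 := by
      simp only [hφ, hX0, hS0, hzz, hzs Ss]
      linarith
    have hdot : b ⬝ᵥ ((K:ℝ)⁻¹ • ∑ k ∈ Finset.Icc 1 K, y k)
        = (K:ℝ)⁻¹ * ∑ k ∈ Finset.Icc 1 K, b ⬝ᵥ y k := by
      rw [dotProduct_smul, dot_sum, smul_eq_mul]
    have hys_sum : ∑ k ∈ Finset.Icc 1 K, (b ⬝ᵥ ys - b ⬝ᵥ y k)
        = (K:ℝ) * (b ⬝ᵥ ys) - ∑ k ∈ Finset.Icc 1 K, b ⬝ᵥ y k := by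
      rw [Finset.sum_sub_distrib, Finset.sum_const, Nat.card_Icc]
      simp [nsmul_eq_mul]
    have hIcc := sum_Icc_one K (fun k => b ⬝ᵥ ys - b ⬝ᵥ y k)
    have hmainG : (K:ℝ) * (b ⬝ᵥ ys) - ∑ k ∈ Finset.Icc 1 K, b ⬝ᵥ y k ≤ RS ^ 2 / 2 := by
      rw [← hys_sum, hIcc]
      exact le_trans hsumG (by linarith)
    rw [hdot]
    have hmul : (K:ℝ) * (-((K:ℝ)⁻¹ * ∑ k ∈ Finset.Icc 1 K, b ⬝ᵥ y k) + b ⬝ᵥ ys)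
        ≤ (K:ℝ) * ε := by
      have hexp : (K:ℝ) * (-((K:ℝ)⁻¹ * ∑ k ∈ Finset.Icc 1 K, b ⬝ᵥ y k) + b ⬝ᵥ ys)
          = (K:ℝ) * (b ⬝ᵥ ys) - ∑ k ∈ Finset.Icc 1 K, b ⬝ᵥ y k := by
        field_simp
        ring
      rw [hexp]
      nlinarith [sq_nonneg RX]
    exact le_of_mul_le_mul_left hmul hKpos
  -- Part 2: feasibility
  · set ψ : ℕ → ℝ :=
      fun k => minner (X k - Xs) (X k - Xs) + minner (S k - Ss) (S k - Ss) with hψ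
    have hψmono : ∀ k, ψ k ≤ ψ 0 := by
      intro k
      induction k with
      | zero => exact le_refl _
      | succ k ih => exact le_trans ((hstep k).2.1) ih
    have hψ0 : ψ 0 ≤ RX ^ 2 + RS ^ 2 := by
      simp only [hψ, hX0, hS0, hzs Xs, hzs Ss]
      linarith
    have hXK : minner (X K) (X K) ≤ 4 * RX ^ 2 + 2 * RS ^ 2 := by
      have h := q_add_le (X K - Xs) Xs
      have he : X K - Xs + Xs = X K := by abel
      rw [he] at h
      have h2 : ψ K ≤ RX ^ 2 + RS ^ 2 := (hψmono K).trans hψ0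
      have h2' : minner (X K - Xs) (X K - Xs) + minner (S K - Ss) (S K - Ss) = ψ K := rfl
      have h3 := minner_self_nonneg (S K - Ss)
      linarith
    have hsumF : ∑ k ∈ Finset.Icc 1 K, (Aadj A (y k) + S k - C) = X K := by
      rw [sum_Icc_one]
      calc ∑ k ∈ Finset.range K, (Aadj A (y (k+1)) + S (k+1) - C)
          = ∑ k ∈ Finset.range K, (X (k+1) - X k) :=
            Finset.sum_congr rfl fun k _ => (hstep k).2.2.1
        _ = X K - X 0 := Finset.sum_range_sub X K
        _ = X K := by rw [hX0, sub_zero]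
    have hcard : ∑ _k ∈ Finset.Icc 1 K, C = (K:ℝ) • C := by
      rw [Finset.sum_const, Nat.card_Icc, Nat.add_sub_cancel, Nat.cast_smul_eq_nsmul]
    have key2 : Aadj A ((K:ℝ)⁻¹ • ∑ k ∈ Finset.Icc 1 K, y k)
        + (K:ℝ)⁻¹ • (∑ k ∈ Finset.Icc 1 K, S k) - C = (K:ℝ)⁻¹ • X K := by
      rw [Aadj_smul, Aadj_sum, ← hsumF, Finset.sum_sub_distrib, Finset.sum_add_distrib,
        hcard, smul_sub, smul_add, smul_smul, inv_mul_cancel₀ hKne, one_smul]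
    rw [key2, frob_eq]
    have hq : minner ((K:ℝ)⁻¹ • X K) ((K:ℝ)⁻¹ • X K)
        = (K:ℝ)⁻¹ * ((K:ℝ)⁻¹ * minner (X K) (X K)) := by
      rw [minner_smul_left, minner_smul_right]
    have hR2 : (1:ℝ) ≤ 1 + RX ^ 2 + RS ^ 2 := by nlinarith [sq_nonneg RX, sq_nonneg RS]
    have h4 : (2 * (1 + RX ^ 2 + RS ^ 2)) ^ 2 ≤ (ε * K) ^ 2 := by
      refine pow_le_pow_left₀ (by nlinarith) hεK 2
    have h3 : 4 * RX ^ 2 + 2 * RS ^ 2 ≤ ε ^ 2 * (K:ℝ) ^ 2 := by nlinarith [h4, hR2]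
    have hfin : minner ((K:ℝ)⁻¹ • X K) ((K:ℝ)⁻¹ • X K) ≤ ε ^ 2 := by
      rw [hq]
      have hdiv : (K:ℝ)⁻¹ * ((K:ℝ)⁻¹ * minner (X K) (X K))
          = minner (X K) (X K) / (K:ℝ) ^ 2 := by
        rw [div_eq_mul_inv, pow_two, mul_inv]
        ring
      rw [hdiv, div_le_iff₀ (by positivity)]
      calc minner (X K) (X K) ≤ 4 * RX ^ 2 + 2 * RS ^ 2 := hXK
        _ ≤ ε ^ 2 * (K:ℝ) ^ 2 := h3
    calc Real.sqrt (minner ((K:ℝ)⁻¹ • X K) ((K:ℝ)⁻¹ • X K))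
        ≤ Real.sqrt (ε ^ 2) := Real.sqrt_le_sqrt hfin
      _ = ε := by rw [Real.sqrt_sq hε.le]


end QADMM
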